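/- Let V be a finite-dimensional ℂ(q)-vector space equipped with a K-valued Hermitian inner product (·,·) (i.e., sesquilinear with respect to the conjugation on ℂ(q) fixing q, Hermitian symmetric, with lc((v,v)) ≥ 0, lc((v,v)) = 0 only for v = 0, and deg((v,v)) always even or −∞). Then V possesses an orthogonal basis all of whose vectors v satisfy lt(v) = 1, where lt(v) := lc((v,v))^{1/2} q^{deg((v,v))/2}. -/

import Mathlib

/-!
An anisotropic Hermitian form has an orthogonal basis (Gram–Schmidt: split off a vector `x` with
`(x, x) ≠ 0` together with its orthogonal hyperplane, and induct), and here `(v, v) = 0` forces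
`v = 0` because `lc` vanishes only at `0`. A basis vector `v` with `(v, v) = r q^(2m) + …`, `r > 0`,
is then rescaled by `c = r^(-1/2) q^(-m)`, which is fixed by the conjugation, so that
`(c v, c v) = c² (v, v)` has leading coefficient `1` and degree `0`.
-/

open Polynomial

noncomputable section

/-- `K = ℂ(q)`, with `RatFunc.X` playing the role of `q`. -/
abbrev Kq : Type := RatFunc ℂ

/-- The conjugation on `ℂ(q)` extending complex conjugation with `q* = q`. -/
noncomputable def qconj : Kq →+* Kq :=
  RatFunc.mapRingHom (Polynomial.mapRingHom (starRingEnd ℂ))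
    (by
      intro p hp
      simp only [Submonoid.mem_comap, mem_nonZeroDivisors_iff_ne_zero] at *
      simpa using hp)

/-- The leading coefficient `lc(c)` of a rational function. -/
noncomputable def lcoef (c : Kq) : ℂ := c.num.leadingCoeff / c.denom.leadingCoeff

open Module

namespace LinearMap

theorem IsOrthoᵢ.unitsSMul {R M ι : Type*} [CommSemiring R] [AddCommMonoid M] [Module R M]
    {I : R →+* R} {B : M →ₗ[R] M →ₛₗ[I] R} {v : Basis ι R M} (hv : B.IsOrthoᵢ v) (w : ι → Rˣ) :
    B.IsOrthoᵢ (v.unitsSMul w) := by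
  intro i j hij
  rw [Function.onFun, Basis.unitsSMul_apply, Basis.unitsSMul_apply, Units.smul_def, Units.smul_def,
    map_smulₛₗ₂, map_smulₛₗ, (hv hij : B (v i) (v j) = 0), smul_zero, smul_zero]

variable {K V : Type*} [Field K] [AddCommGroup V] [Module K V] {J : K →+* K}

theorem exists_orthogonal_basis_of_anisotropic [FiniteDimensional K V]
    {B : V →ₗ[K] V →ₛₗ[J] K} (hB : B.IsRefl) (hanis : ∀ x, B x x = 0 → x = 0) :
    ∃ v : Basis (Fin (finrank K V)) K V, B.IsOrthoᵢ v := by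
  suffices ∀ d, finrank K V = d → ∃ v : Basis (Fin d) K V, B.IsOrthoᵢ v from this _ rfl
  intro d hd
  induction d generalizing V with
  | zero => exact ⟨basisOfFinrankZero hd, fun i => i.elim0⟩
  | succ d ih =>
    have : Nontrivial V := Module.nontrivial_of_finrank_eq_succ hd
    obtain ⟨x, hx⟩ := exists_ne (0 : V)
    have hxx : B x x ≠ 0 := mt (hanis x) hx
    -- the left orthogonal complement of `x`, a hyperplane since `B x x ≠ 0`
    set f : Dual K V := B.flip x
    have hfx : f x ≠ 0 := hxx
    have hN : finrank K (ker f) = d := by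
      have := Dual.finrank_ker_add_one_of_ne_zero (f := f) (fun h => hfx (by simp [h]))
      omega
    obtain ⟨v', hv'⟩ := ih (hB.domRestrict (ker f))
      (fun y hy => Subtype.ext (hanis y hy)) hN
    have hli : ∀ c : K, ∀ y ∈ ker f, c • x + y = 0 → c = 0 := by
      intro c y hy hcy
      have := congrArg f hcy
      rw [map_add, map_smul, mem_ker.mp hy, smul_eq_mul, add_zero, map_zero] at this
      exact (mul_eq_zero.mp this).resolve_right hfx
    have hsp : ∀ z : V, ∃ c : K, z + c • x ∈ ker f := fun z =>
      ⟨-(f z / f x), by simp [mem_ker, field]⟩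
    refine ⟨Basis.mkFinCons x v' hli hsp, ?_⟩
    have hv'x : ∀ i, B (v' i) x = 0 := fun i => (v' i).2
    rw [Basis.coe_mkFinCons]
    intro i j hij
    induction i using Fin.cases <;> induction j using Fin.cases <;>
      simp only [Function.onFun, Fin.cons_zero, Fin.cons_succ, Function.comp_apply]
    · exact (hij rfl).elim
    · exact hB _ _ (hv'x _)
    · exact hv'x _
    · exact hv' (ne_of_apply_ne _ hij)

end LinearMap

section HermitianForm

variable {K V : Type*} [CommRing K] [AddCommGroup V] [Module K V] (σ : K →+* K)

def hermitianForm (B : V → V → K)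
    (hlin : ∀ (a b : K) (u v w : V), B (a • u + b • v) w = a * B u w + b * B v w)
    (hsymm : ∀ u v : V, B v u = σ (B u v)) : V →ₗ[K] V →ₛₗ[σ] K :=
  have hadd (u v w : V) : B (u + v) w = B u w + B v w := by simpa using hlin 1 1 u v w
  have hsmul (a : K) (u w : V) : B (a • u) w = a * B u w := by simpa using hlin a 0 u u w
  LinearMap.mk₂'ₛₗ _ _ B hadd hsmul
    (fun u v w => by rw [hsymm, hadd, map_add, ← hsymm, ← hsymm])
    (fun a u w => by rw [hsymm, hsmul, map_mul, ← hsymm, smul_eq_mul])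

variable {σ} {B : V → V → K}
  {hlin : ∀ (a b : K) (u v w : V), B (a • u + b • v) w = a * B u w + b * B v w}
  {hsymm : ∀ u v : V, B v u = σ (B u v)}

@[simp]
theorem hermitianForm_apply (u v : V) : hermitianForm σ B hlin hsymm u v = B u v := rfl

theorem isRefl_hermitianForm : (hermitianForm σ B hlin hsymm).IsRefl := fun u v h => by
  rw [hermitianForm_apply] at *
  rw [hsymm, h, map_zero]

end HermitianForm

theorem lcoef_eq_zero_iff {f : Kq} : lcoef f = 0 ↔ f = 0 := by
  simp [lcoef, RatFunc.denom_ne_zero, RatFunc.num_eq_zero_iff]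

theorem lcoef_mul (f g : Kq) : lcoef (f * g) = lcoef f * lcoef g := by
  have h := congrArg leadingCoeff (RatFunc.num_denom_mul f g)
  simp only [leadingCoeff_mul] at h
  have hden (x : Kq) : x.denom.leadingCoeff ≠ 0 := by simp [RatFunc.denom_ne_zero]
  have := hden f; have := hden g; have := hden (f * g)
  simp only [lcoef]
  field_simp
  linear_combination h

def lcoefHom : Kq →*₀ ℂ where
  toFun := lcoef
  map_zero' := lcoef_eq_zero_iff.mpr rfl
  map_one' := by simp [lcoef]
  map_mul' := lcoef_mul

theorem lcoef_C (a : ℂ) : lcoef (RatFunc.C a) = a := by simp [lcoef]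

theorem lcoef_X_zpow (n : ℤ) : lcoef (RatFunc.X ^ n) = 1 := by
  change lcoefHom _ = 1
  rw [map_zpow₀]
  simp [lcoefHom, lcoef]

theorem RatFunc.intDegree_X_zpow {K : Type*} [Field K] (n : ℤ) :
    (RatFunc.X ^ n : RatFunc K).intDegree = n := by
  have hnat (k : ℕ) : (RatFunc.X ^ k : RatFunc K).intDegree = k := by
    rw [← RatFunc.algebraMap_X, ← map_pow, RatFunc.intDegree_polynomial, natDegree_X_pow]
  obtain ⟨k, rfl | rfl⟩ := n.eq_nat_or_neg
  · simpa using hnat k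
  · simpa [RatFunc.intDegree_inv] using hnat k

theorem qconj_algebraMap (p : ℂ[X]) :
    qconj (algebraMap ℂ[X] Kq p) = algebraMap ℂ[X] Kq (p.map (starRingEnd ℂ)) := by
  rw [qconj, RatFunc.coe_mapRingHom_eq_coe_map, RatFunc.map_apply]
  simp [RatFunc.num_algebraMap, RatFunc.denom_algebraMap]

theorem qconj_X : qconj RatFunc.X = RatFunc.X := by
  simp [← RatFunc.algebraMap_X, qconj_algebraMap]

theorem qconj_C (a : ℂ) : qconj (RatFunc.C a) = RatFunc.C (starRingEnd ℂ a) := by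
  simp [← RatFunc.algebraMap_C, qconj_algebraMap]

theorem exists_lcoef_mul_qconj_mul_eq_one {f : Kq} (hf : f ≠ 0)
    (hlc : (lcoef f).im = 0 ∧ 0 ≤ (lcoef f).re) (hdeg : Even f.intDegree) :
    ∃ c : Kq, c ≠ 0 ∧ lcoef (c * qconj c * f) = 1 ∧ (c * qconj c * f).intDegree = 0 := by
  obtain ⟨m, hm⟩ := hdeg
  set r := (lcoef f).re
  have hr : lcoef f = r := Complex.ext rfl hlc.1
  have hr0 : 0 < r := hlc.2.lt_of_ne fun h => hf (lcoef_eq_zero_iff.mp (by rw [hr, ← h]; simp))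
  set a : ℝ := (√r)⁻¹
  have ha : a ^ 2 * r = 1 := by simp [a, inv_pow, Real.sq_sqrt hr0.le, hr0.ne']
  set c : Kq := RatFunc.C (a : ℂ) * RatFunc.X ^ (-m)
  have hc : qconj c = c := by simp [c, qconj_C, qconj_X]
  have hC : (RatFunc.C (a : ℂ) : Kq) ≠ 0 := by simp [a, hr0.le, hr0.ne']
  have hX : (RatFunc.X : Kq) ^ (-m) ≠ 0 := zpow_ne_zero _ RatFunc.X_ne_zero
  have hc0 : c ≠ 0 := mul_ne_zero hC hX
  have hcdeg : c.intDegree = -m := by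
    rw [RatFunc.intDegree_mul hC hX, RatFunc.intDegree_C, RatFunc.intDegree_X_zpow, zero_add]
  refine ⟨c, hc0, ?_, ?_⟩
  · rw [hc, lcoef_mul, lcoef_mul, hr]
    simp only [c, lcoef_mul, lcoef_C, lcoef_X_zpow]
    exact_mod_cast (by linear_combination ha : a * 1 * (a * 1) * r = 1)
  · rw [hc, RatFunc.intDegree_mul (mul_ne_zero hc0 hc0) hf, RatFunc.intDegree_mul hc0 hc0, hcdeg,
      hm]
    ring

theorem statement1 (V : Type) [AddCommGroup V] [Module Kq V] [FiniteDimensional Kq V]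
    (B : V → V → Kq)
    -- sesquilinearity in the first argument
    (hlin : ∀ (a b : Kq) (u v w : V), B (a • u + b • v) w = a * B u w + b * B v w)
    -- Hermitian symmetry with respect to the conjugation fixing `q`
    (hsymm : ∀ u v : V, B v u = qconj (B u v))
    -- `lc((v,v)) ≥ 0`
    (hpos : ∀ v : V, (lcoef (B v v)).im = 0 ∧ 0 ≤ (lcoef (B v v)).re)
    -- `lc((v,v)) = 0` only for `v = 0`
    (hdef : ∀ v : V, lcoef (B v v) = 0 → v = 0)
    -- `deg((v,v))` is even (or `−∞`, i.e. `(v,v) = 0`)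
    (heven : ∀ v : V, B v v ≠ 0 → Even (B v v).intDegree) :
    ∃ (n : ℕ) (b : Module.Basis (Fin n) Kq V),
      (∀ i j : Fin n, i ≠ j → B (b i) (b j) = 0) ∧
      (∀ i : Fin n, lcoef (B (b i) (b i)) = 1 ∧ (B (b i) (b i)).intDegree = 0) := by
  set H := hermitianForm qconj B hlin hsymm
  have hanis (v : V) (hv : H v v = 0) : v = 0 := hdef v (lcoef_eq_zero_iff.mpr hv)
  obtain ⟨b, hb⟩ := LinearMap.exists_orthogonal_basis_of_anisotropic isRefl_hermitianForm hanis
  have hbb (i) : B (b i) (b i) ≠ 0 := fun h => b.ne_zero i (hanis _ h)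
  choose c hc0 hc using fun i =>
    exists_lcoef_mul_qconj_mul_eq_one (hbb i) (hpos (b i)) (heven _ (hbb i))
  refine ⟨_, b.unitsSMul fun i => .mk0 (c i) (hc0 i), fun i j hij => hb.unitsSMul _ hij, fun i => ?_⟩
  have hscale (a : Kq) (x : V) : B (a • x) (a • x) = a * qconj a * B x x := by
    change H (a • x) (a • x) = a * qconj a * H x x
    rw [LinearMap.map_smulₛₗ₂, map_smulₛₗ, RingHom.id_apply, smul_eq_mul, smul_eq_mul, mul_assoc]
  simpa [Module.Basis.unitsSMul_apply, hscale] using hc i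

end
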